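/- Let f, g : D → ℝ≥0 be measurable functions on a finite measure space D with total measure V. Then ∫_D f·g ≥ ∫₀^∞ ∫₀^∞ max{ |{f > s}| + |{g > t}| − V, 0 } ds dt. -/

import Mathlib

/-!
Applying the layer-cake formula first to `f` with respect to the measure `g dμ`, and then to `g`
on each superlevel set `{f > s}`, writes `∫ f g dμ` as `∫∫ μ({f > s} ∩ {g > t}) ds dt`.
The integrand is bounded below pointwise by `μ{f > s} + μ{g > t} - μ univ`, since
`μ A + μ B = μ (A ∪ B) + μ (A ∩ B) ≤ μ univ + μ (A ∩ B)`.
-/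

open MeasureTheory Set

theorem measure_add_measure_tsub_measure_univ_le_measure_inter {α : Type*} [MeasurableSpace α]
    (μ : Measure α) (s : Set α) {t : Set α} (ht : MeasurableSet t) :
    μ s + μ t - μ univ ≤ μ (s ∩ t) := by
  rw [tsub_le_iff_right, ← measure_union_add_inter s ht, add_comm]
  gcongr
  exact subset_univ _

section LayerCake

variable {α : Type*} [MeasurableSpace α] (μ : Measure α) {f g : α → ℝ}

theorem lintegral_ofReal_mul_eq_lintegral_setLIntegral (hf : Measurable f) (hg : Measurable g)
    (hf0 : 0 ≤ᵐ[μ] f) :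
    ∫⁻ x, ENNReal.ofReal (f x * g x) ∂μ
      = ∫⁻ s in Ioi 0, ∫⁻ x in {x | s < f x}, ENNReal.ofReal (g x) ∂μ := by
  calc ∫⁻ x, ENNReal.ofReal (f x * g x) ∂μ
      = ∫⁻ x, ENNReal.ofReal (f x) ∂μ.withDensity fun x => ENNReal.ofReal (g x) := by
        rw [lintegral_withDensity_eq_lintegral_mul μ hg.ennreal_ofReal hf.ennreal_ofReal]
        refine lintegral_congr_ae ?_
        filter_upwards [hf0] with x hx
        simp [ENNReal.ofReal_mul hx, mul_comm]
    _ = _ := by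
        rw [lintegral_eq_lintegral_meas_lt _ (withDensity_absolutelyContinuous μ _ hf0)
          hf.aemeasurable]
        refine lintegral_congr fun s => ?_
        exact withDensity_apply _ (measurableSet_lt measurable_const hf)

theorem lintegral_ofReal_mul_eq_lintegral_lintegral_measure_inter (hf : Measurable f)
    (hg : Measurable g) (hf0 : 0 ≤ᵐ[μ] f) (hg0 : 0 ≤ᵐ[μ] g) :
    ∫⁻ x, ENNReal.ofReal (f x * g x) ∂μ
      = ∫⁻ s in Ioi 0, ∫⁻ t in Ioi 0, μ ({x | s < f x} ∩ {x | t < g x}) := by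
  rw [lintegral_ofReal_mul_eq_lintegral_setLIntegral μ hf hg hf0]
  refine lintegral_congr fun s => ?_
  rw [lintegral_eq_lintegral_meas_lt _ (ae_restrict_of_ae hg0) hg.aemeasurable]
  refine lintegral_congr fun t => ?_
  rw [Measure.restrict_apply (measurableSet_lt measurable_const hg), inter_comm]

end LayerCake

theorem product_lower_bound_by_distribution_general
    {α : Type*} [MeasurableSpace α] (μ : Measure α)
    (f g : α → ℝ) (hf : Measurable f) (hg : Measurable g)
    (hf0 : ∀ x, 0 ≤ f x) (hg0 : ∀ x, 0 ≤ g x) :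
    (∫⁻ s in Set.Ioi (0:ℝ), ∫⁻ t in Set.Ioi (0:ℝ),
        ((μ {x | s < f x} + μ {x | t < g x}) - μ Set.univ))
      ≤ ∫⁻ x, ENNReal.ofReal (f x * g x) ∂μ := by
  rw [lintegral_ofReal_mul_eq_lintegral_lintegral_measure_inter μ hf hg
    (.of_forall hf0) (.of_forall hg0)]
  gcongr with s t
  exact measure_add_measure_tsub_measure_univ_le_measure_inter μ _
    (measurableSet_lt measurable_const hg)

theorem product_lower_bound_by_distribution
    {α : Type*} [MeasurableSpace α] (μ : Measure α) [IsFiniteMeasure μ]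
    (f g : α → ℝ) (hf : Measurable f) (hg : Measurable g)
    (hf0 : ∀ x, 0 ≤ f x) (hg0 : ∀ x, 0 ≤ g x) :
    (∫⁻ s in Set.Ioi (0:ℝ), ∫⁻ t in Set.Ioi (0:ℝ),
        ((μ {x | s < f x} + μ {x | t < g x}) - μ Set.univ))
      ≤ ∫⁻ x, ENNReal.ofReal (f x * g x) ∂μ :=
  product_lower_bound_by_distribution_general μ f g hf hg hf0 hg0
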